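/- arXiv:1608.02197 — 2 statements merged into one kernel-verified Lean document; each statement's English description precedes it below -/
import Mathlib

section
/- Let x be a vertex of the hierarchical graph H_{n_1,…,n_k} with alt(x) ≥ 1. Then there exists a vertex y adjacent to x with alt(y) = alt(x) − 1, and every vertex y' adjacent to x satisfies alt(y') ≥ alt(x) − 1. -/
/-!
The alternating number of `x` depends only on its zero pattern. Every edge of the hierarchical
graph either preserves that pattern (rule (A3), and rule (A1) when the first coordinates are both
zero or both nonzero) or inverts it on an initial segment `0, …, t` and preserves it beyond (rule
(A2) and the rest of (A1)). Inverting a prefix changes only whether position `t` alternates, so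
`alt` drops by at most one along an edge. Conversely, if `t` is the first alternating position of
`x`, the zero pattern is constant on `0, …, t`, so inverting it there is an (A2)-move, and it
removes exactly the alternation at `t`.
-/

/-- The value of the `j`-th coordinate (0-indexed) of the string `x`,
extended by `0` for positions `≥ k`. -/
def extVal (n : ℕ → ℕ) (k : ℕ) (x : ∀ i : Fin k, Fin (n i)) (j : ℕ) : ℕ :=
  if h : j < k then (x ⟨j, h⟩).val else 0

/-- The alternating number of the string `x`: the number of (0-indexed) positions
`j ∈ {0,…,k-1}` such that exactly one of `x_j`, `x_{j+1}` is zero (with `x_k := 0`). -/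
def altNum (n : ℕ → ℕ) (k : ℕ) (x : ∀ i : Fin k, Fin (n i)) : ℕ :=
  ((Finset.range k).filter (fun j =>
    (extVal n k x j = 0 ∧ extVal n k x (j + 1) ≠ 0) ∨
    (extVal n k x j ≠ 0 ∧ extVal n k x (j + 1) = 0))).card

/-- Adjacency in the hierarchical graph `H_{n_1,…,n_k}` (coordinates 0-indexed):
rule (A1): the two strings differ exactly in the first coordinate;
rule (A2): for some `j`, one string has its first `j+1` coordinates all zero, the other
has its first `j+1` coordinates all nonzero, and they agree on the remaining coordinates;
rule (A3): for some `m ≥ 1`, both strings have their first `m` coordinates zero, their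
`m`-th coordinates are distinct and nonzero, and they agree beyond position `m`. -/
def HierAdj (n : ℕ → ℕ) (k : ℕ) (x y : ∀ i : Fin k, Fin (n i)) : Prop :=
  x ≠ y ∧
    ((∀ i : Fin k, 0 < i.val → x i = y i) ∨
     (∃ j : Fin k,
       (((∀ i : Fin k, i.val ≤ j.val → (x i).val = 0) ∧
         (∀ i : Fin k, i.val ≤ j.val → (y i).val ≠ 0)) ∨
        ((∀ i : Fin k, i.val ≤ j.val → (y i).val = 0) ∧
         (∀ i : Fin k, i.val ≤ j.val → (x i).val ≠ 0))) ∧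
       (∀ i : Fin k, j.val < i.val → x i = y i)) ∨
     (∃ m : Fin k, 0 < m.val ∧
       (∀ i : Fin k, i.val < m.val → (x i).val = 0 ∧ (y i).val = 0) ∧
       (x m).val ≠ 0 ∧ (y m).val ≠ 0 ∧ x m ≠ y m ∧
       (∀ i : Fin k, m.val < i.val → x i = y i)))

/-- The hierarchical graph `H_{n_1,…,n_k}` as a simple graph on the strings
`x = x_1…x_k` with `x_i ∈ Z_{n_i}`. -/
def hierGraph (n : ℕ → ℕ) (k : ℕ) : SimpleGraph (∀ i : Fin k, Fin (n i)) where
  Adj := HierAdj n k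
  symm := by
    constructor
    rintro x y ⟨hne, h⟩
    refine ⟨hne.symm, ?_⟩
    rcases h with h | ⟨j, hj, hag⟩ | ⟨m, hm, hpre, hx, hy, hxy, hs⟩
    · exact Or.inl fun i hi => (h i hi).symm
    · exact Or.inr (Or.inl ⟨j, hj.symm, fun i hi => (hag i hi).symm⟩)
    · exact Or.inr (Or.inr ⟨m, hm, fun i hi => ⟨(hpre i hi).2, (hpre i hi).1⟩,
        hy, hx, hxy.symm, fun i hi => (hs i hi).symm⟩)
  loopless := ⟨fun x h => h.1 rfl⟩

open Finset

lemma card_filter_le_card_filter_add_one {α : Type*} [DecidableEq α] {s : Finset α}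
    {p q : α → Prop} [DecidablePred p] [DecidablePred q] (t : α)
    (h : ∀ j ∈ s, j ≠ t → (p j ↔ q j)) :
    #(s.filter p) ≤ #(s.filter q) + 1 :=
  calc #(s.filter p) ≤ #(insert t (s.filter q)) := by
        refine card_le_card fun j hj => ?_
        rw [mem_filter] at hj
        rw [mem_insert, mem_filter]
        by_cases hjt : j = t
        · exact .inl hjt
        · exact .inr ⟨hj.1, (h j hj.1 hjt).1 hj.2⟩
    _ ≤ #(s.filter q) + 1 := card_insert_le _ _

lemma card_filter_eq_card_filter_add_one {α : Type*} [DecidableEq α] {s : Finset α}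
    {p q : α → Prop} [DecidablePred p] [DecidablePred q] {t : α} (hts : t ∈ s)
    (hpt : p t) (hqt : ¬ q t) (h : ∀ j ∈ s, j ≠ t → (p j ↔ q j)) :
    #(s.filter p) = #(s.filter q) + 1 := by
  have hins : s.filter p = insert t (s.filter q) := by
    ext j
    rw [mem_filter, mem_insert, mem_filter]
    by_cases hjt : j = t
    · subst hjt
      simp [hts, hpt]
    · simp only [hjt, false_or]
      exact and_congr_right fun hjs => h j hjs hjt
  rw [hins, card_insert_of_notMem (by simp [hqt])]

/-- The positions counted by `altNum`, for `f = extVal n k x`. -/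
def IsAltAt (f : ℕ → ℕ) (j : ℕ) : Prop :=
  (f j = 0 ∧ f (j + 1) ≠ 0) ∨ (f j ≠ 0 ∧ f (j + 1) = 0)

instance (f : ℕ → ℕ) : DecidablePred (IsAltAt f) := fun j => by
  unfold IsAltAt; infer_instance

lemma isAltAt_iff_of_zero_iff {f g : ℕ → ℕ} (h : ∀ j, f j = 0 ↔ g j = 0) (j : ℕ) :
    IsAltAt f j ↔ IsAltAt g j := by
  unfold IsAltAt
  have := h j
  have := h (j + 1)
  tauto

lemma eq_zero_iff_of_forall_not_isAltAt {f : ℕ → ℕ} {t : ℕ} (h : ∀ j < t, ¬ IsAltAt f j) :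
    ∀ j ≤ t, (f j = 0 ↔ f 0 = 0) := by
  intro j hj
  induction j with
  | zero => rfl
  | succ j ih =>
    have := h j hj
    unfold IsAltAt at this
    rw [← ih (by omega)]
    tauto

def ZeroFlipUpTo (t : ℕ) (f g : ℕ → ℕ) : Prop :=
  (∀ j ≤ t, (f j = 0 ↔ g j ≠ 0)) ∧ ∀ j, t < j → (f j = 0 ↔ g j = 0)

namespace ZeroFlipUpTo

variable {t : ℕ} {f g : ℕ → ℕ}

lemma symm (h : ZeroFlipUpTo t f g) : ZeroFlipUpTo t g f :=
  ⟨fun j hj => by have := h.1 j hj; tauto, fun j hj => (h.2 j hj).symm⟩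

/-- Both ends of a window `{j, j + 1}` are flipped, or neither is, unless `j = t`. -/
lemma isAltAt_iff_of_ne (h : ZeroFlipUpTo t f g) {j : ℕ} (hj : j ≠ t) :
    IsAltAt f j ↔ IsAltAt g j := by
  unfold IsAltAt
  rcases Nat.lt_or_gt_of_ne hj with hlt | hgt
  · have := h.1 j hlt.le
    have := h.1 (j + 1) hlt
    tauto
  · have := h.2 j hgt
    have := h.2 (j + 1) (by omega)
    tauto

lemma isAltAt_iff_not (h : ZeroFlipUpTo t f g) : IsAltAt f t ↔ ¬ IsAltAt g t := by
  unfold IsAltAt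
  have := h.1 t le_rfl
  have := h.2 (t + 1) t.lt_succ_self
  tauto

end ZeroFlipUpTo

section Alternation

variable {n : ℕ → ℕ} {k : ℕ}

lemma altNum_eq_card_isAltAt (x : ∀ i : Fin k, Fin (n i)) :
    altNum n k x = #{j ∈ range k | IsAltAt (extVal n k x) j} := rfl

lemma extVal_of_lt (x : ∀ i : Fin k, Fin (n i)) {j : ℕ} (h : j < k) :
    extVal n k x j = (x ⟨j, h⟩).val := dif_pos h

lemma extVal_of_le (x : ∀ i : Fin k, Fin (n i)) {j : ℕ} (h : k ≤ j) :
    extVal n k x j = 0 := dif_neg h.not_gt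

lemma extVal_eq_of_forall_gt {x y : ∀ i : Fin k, Fin (n i)} {t : ℕ}
    (h : ∀ i : Fin k, t < i.val → x i = y i) {j : ℕ} (hj : t < j) :
    extVal n k x j = extVal n k y j := by
  by_cases hjk : j < k
  · rw [extVal_of_lt x hjk, extVal_of_lt y hjk, h ⟨j, hjk⟩ hj]
  · rw [extVal_of_le x (not_lt.1 hjk), extVal_of_le y (not_lt.1 hjk)]

lemma altNum_eq_of_zero_iff {x y : ∀ i : Fin k, Fin (n i)}
    (h : ∀ j, extVal n k x j = 0 ↔ extVal n k y j = 0) : altNum n k x = altNum n k y := by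
  simp only [altNum_eq_card_isAltAt, isAltAt_iff_of_zero_iff h]

lemma altNum_le_add_one_of_zeroFlipUpTo {x y : ∀ i : Fin k, Fin (n i)} {t : ℕ}
    (h : ZeroFlipUpTo t (extVal n k x) (extVal n k y)) : altNum n k x ≤ altNum n k y + 1 :=
  card_filter_le_card_filter_add_one t fun _ _ hj => h.isAltAt_iff_of_ne hj

lemma altNum_eq_add_one_of_zeroFlipUpTo {x y : ∀ i : Fin k, Fin (n i)} {t : ℕ}
    (h : ZeroFlipUpTo t (extVal n k x) (extVal n k y)) (ht : t < k)
    (hx : IsAltAt (extVal n k x) t) : altNum n k x = altNum n k y + 1 :=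
  card_filter_eq_card_filter_add_one (mem_range.2 ht) hx (h.isAltAt_iff_not.1 hx)
    fun _ _ hj => h.isAltAt_iff_of_ne hj

lemma zeroFlipUpTo_of_prefix {x y : ∀ i : Fin k, Fin (n i)} {t : ℕ} (ht : t < k)
    (hx : ∀ i : Fin k, i.val ≤ t → (x i).val = 0) (hy : ∀ i : Fin k, i.val ≤ t → (y i).val ≠ 0)
    (hagree : ∀ i : Fin k, t < i.val → x i = y i) :
    ZeroFlipUpTo t (extVal n k x) (extVal n k y) := by
  refine ⟨fun j hj => ?_, fun j hj => by rw [extVal_eq_of_forall_gt hagree hj]⟩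
  rw [extVal_of_lt x (hj.trans_lt ht), extVal_of_lt y (hj.trans_lt ht)]
  exact iff_of_true (hx _ hj) (hy _ hj)

lemma altNum_le_altNum_add_one_of_adj {x y : ∀ i : Fin k, Fin (n i)}
    (hxy : (hierGraph n k).Adj x y) : altNum n k x ≤ altNum n k y + 1 := by
  obtain ⟨-, hfirst | ⟨t, hprefix, hagree⟩ | ⟨m, -, hzero, hxm, hym, -, hagree⟩⟩ := hxy
  · have hgt : ∀ j, 0 < j → extVal n k x j = extVal n k y j :=
      fun j => extVal_eq_of_forall_gt hfirst
    by_cases h0 : extVal n k x 0 = 0 ↔ extVal n k y 0 = 0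
    · refine (altNum_eq_of_zero_iff fun j => ?_).le.trans (Nat.le_succ _)
      rcases j.eq_zero_or_pos with rfl | hj
      · exact h0
      · rw [hgt j hj]
    · refine altNum_le_add_one_of_zeroFlipUpTo (t := 0)
        ⟨fun j hj => ?_, fun j hj => by rw [hgt j hj]⟩
      rw [Nat.le_zero.1 hj]
      tauto
  · rcases hprefix with ⟨hx, hy⟩ | ⟨hy, hx⟩
    · exact altNum_le_add_one_of_zeroFlipUpTo (zeroFlipUpTo_of_prefix t.isLt hx hy hagree)
    · exact altNum_le_add_one_of_zeroFlipUpTo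
        (zeroFlipUpTo_of_prefix t.isLt hy hx fun i hi => (hagree i hi).symm).symm
  · refine (altNum_eq_of_zero_iff fun j => ?_).le.trans (Nat.le_succ _)
    by_cases hjk : j < k
    · rw [extVal_of_lt x hjk, extVal_of_lt y hjk]
      rcases lt_trichotomy j m.val with hlt | rfl | hgt
      · exact iff_of_true (hzero _ hlt).1 (hzero _ hlt).2
      · exact iff_of_false hxm hym
      · rw [hagree ⟨j, hjk⟩ hgt]
    · rw [extVal_of_le x (not_lt.1 hjk), extVal_of_le y (not_lt.1 hjk)]

end Alternation

section FlipPrefix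

variable {n : ℕ → ℕ} {k : ℕ}

def flipPrefix (hn : ∀ i < k, 2 ≤ n i) (t : ℕ) (x : ∀ i : Fin k, Fin (n i)) :
    ∀ i : Fin k, Fin (n i) := fun i =>
  if i.val ≤ t then
    if (x i).val = 0 then ⟨1, hn i i.isLt⟩ else ⟨0, (x i).pos⟩
  else x i

variable (hn : ∀ i < k, 2 ≤ n i) {t : ℕ} (x : ∀ i : Fin k, Fin (n i))

lemma flipPrefix_eq_zero_iff {i : Fin k} (hi : i.val ≤ t) :
    (flipPrefix hn t x i).val = 0 ↔ (x i).val ≠ 0 := by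
  by_cases hx : (x i).val = 0 <;> simp [flipPrefix, hi, hx]

lemma flipPrefix_of_lt {i : Fin k} (hi : t < i.val) : flipPrefix hn t x i = x i := by
  simp [flipPrefix, hi.not_ge]

lemma zeroFlipUpTo_flipPrefix (ht : t < k) :
    ZeroFlipUpTo t (extVal n k x) (extVal n k (flipPrefix hn t x)) := by
  refine ⟨fun j hj => ?_, fun j hj => ?_⟩
  · rw [extVal_of_lt x (hj.trans_lt ht), extVal_of_lt _ (hj.trans_lt ht)]
    have := flipPrefix_eq_zero_iff hn x (i := ⟨j, hj.trans_lt ht⟩) hj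
    tauto
  · rw [extVal_eq_of_forall_gt (fun i hi => (flipPrefix_of_lt hn x hi).symm) hj]

lemma adj_flipPrefix (ht : t < k) (hconst : ∀ j < t, ¬ IsAltAt (extVal n k x) j) :
    (hierGraph n k).Adj x (flipPrefix hn t x) := by
  have hk : 0 < k := t.zero_le.trans_lt ht
  have hx : ∀ i : Fin k, i.val ≤ t → ((x i).val = 0 ↔ (x ⟨0, hk⟩).val = 0) := fun i hi => by
    simpa only [extVal_of_lt x i.isLt, extVal_of_lt x hk] using
      eq_zero_iff_of_forall_not_isAltAt hconst i hi
  have hy := fun i hi => flipPrefix_eq_zero_iff hn x (t := t) (i := i) hi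
  refine ⟨fun h => ?_, .inr (.inl ⟨⟨t, ht⟩, ?_, fun i hi => (flipPrefix_of_lt hn x hi).symm⟩)⟩
  · have := hy ⟨0, hk⟩ t.zero_le
    rw [← h] at this
    tauto
  · by_cases h0 : (x ⟨0, hk⟩).val = 0
    · refine .inl ⟨fun i hi => (hx i hi).2 h0, fun i hi => ?_⟩
      have := hy i hi
      have := hx i hi
      tauto
    · refine .inr ⟨fun i hi => ?_, fun i hi => (hx i hi).not.2 h0⟩
      have := hy i hi
      have := hx i hi
      tauto

end FlipPrefix

lemma exists_adj_altNum_add_one_eq {n : ℕ → ℕ} {k : ℕ} (hn : ∀ i < k, 2 ≤ n i)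
    {x : ∀ i : Fin k, Fin (n i)} (hx : 1 ≤ altNum n k x) :
    ∃ y, (hierGraph n k).Adj x y ∧ altNum n k y + 1 = altNum n k x := by
  have hex : ∃ j, j < k ∧ IsAltAt (extVal n k x) j := by
    obtain ⟨j, hj⟩ := card_pos.1 hx
    rw [mem_filter, mem_range] at hj
    exact ⟨j, hj⟩
  obtain ⟨ht, hxt⟩ := Nat.find_spec hex
  have hconst : ∀ j < Nat.find hex, ¬ IsAltAt (extVal n k x) j :=
    fun j hj halt => Nat.find_min hex hj ⟨hj.trans ht, halt⟩
  exact ⟨flipPrefix hn (Nat.find hex) x, adj_flipPrefix hn x ht hconst,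
    (altNum_eq_add_one_of_zeroFlipUpTo (zeroFlipUpTo_flipPrefix hn x ht) ht hxt).symm⟩

theorem stmt_3_general (n : ℕ → ℕ) (k : ℕ) (hn : ∀ i < k, 2 ≤ n i)
    (x : ∀ i : Fin k, Fin (n i)) (hx : 1 ≤ altNum n k x) :
    (∃ y, (hierGraph n k).Adj x y ∧ altNum n k y + 1 = altNum n k x) ∧
    (∀ y', (hierGraph n k).Adj x y' → altNum n k x ≤ altNum n k y' + 1) :=
  ⟨exists_adj_altNum_add_one_eq hn hx, fun _ => altNum_le_altNum_add_one_of_adj⟩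

/-- If `alt(x) ≥ 1` then some neighbour `y` of `x` has `alt(y) = alt(x) - 1`,
and no neighbour `y'` of `x` has `alt(y') < alt(x) - 1`. -/
theorem stmt_3 (n : ℕ → ℕ) (k : ℕ) (hk : 1 ≤ k) (hn : ∀ i < k, 2 ≤ n i)
    (x : ∀ i : Fin k, Fin (n i)) (hx : 1 ≤ altNum n k x) :
    (∃ y, (hierGraph n k).Adj x y ∧ altNum n k y + 1 = altNum n k x) ∧
    (∀ y', (hierGraph n k).Adj x y' → altNum n k x ≤ altNum n k y' + 1) :=
  stmt_3_general n k hn x hx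
end

section
/- Let k ≥ 1 and consider the hierarchical graph H_{2,…,2} (k copies of 2), whose vertices are binary strings of length k, with root r = 00…0. For every i with 0 ≤ i ≤ k, the number of vertices at graph distance exactly i from r equals the binomial coefficient C(k,i). -/
/-! In `H_{2,…,2}` rule (A3) never applies, and rules (A1) and (A2) flip a prefix `x_0 … x_p`
of the string, (A2) only when that prefix is constant. Encode `x` by its jump set, the positions
`j` with `x_j ≠ x_{j+1}` (where `x_k := 0`): this is a bijection onto the subsets of
`{0, …, k-1}`, and flipping the prefix up to `p` toggles exactly `p` in the jump
set. So the number of jumps changes by at most one along an edge, and flipping up to the least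
jump lowers it by one: it is the distance from the root. -/

open Finset

theorem SimpleGraph.dist_eq_of_potential {V : Type*} (G : SimpleGraph V) (f : V → ℕ) {r : V}
    (hzero : ∀ x, f x = 0 ↔ x = r) (hadj : ∀ x y, G.Adj x y → f y ≤ f x + 1)
    (hdesc : ∀ x, f x ≠ 0 → ∃ y, G.Adj x y ∧ f y + 1 = f x) (x : V) :
    G.dist r x = f x := by
  have hwalk : ∀ n x, f x = n → ∃ w : G.Walk r x, w.length = n := by
    intro n
    induction n with
    | zero => intro x hx; obtain rfl := (hzero x).1 hx; exact ⟨.nil, rfl⟩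
    | succ n ih =>
      intro x hx
      obtain ⟨y, hxy, hy⟩ := hdesc x (by omega)
      obtain ⟨w, hw⟩ := ih y (by omega)
      exact ⟨w.concat hxy.symm, by rw [SimpleGraph.Walk.length_concat, hw]⟩
  have hlength : ∀ {u v} (w : G.Walk u v), f v ≤ f u + w.length := by
    intro u v w
    induction w with
    | nil => simp
    | cons h _ ih => have := hadj _ _ h; rw [SimpleGraph.Walk.length_cons]; omega
  obtain ⟨w, hw⟩ := hwalk (f x) x rfl
  obtain ⟨w', hw'⟩ := w.reachable.exists_walk_length_eq_dist
  have hr : f r = 0 := (hzero r).2 rfl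
  have := hlength w'
  exact le_antisymm (hw ▸ G.dist_le w) (by omega)

namespace HierGraph

variable {k : ℕ}

def bit (x : Fin k → Fin 2) (j : ℕ) : ℕ := extVal (fun _ => 2) k x j

lemma bit_of_lt (x : Fin k → Fin 2) {j : ℕ} (h : j < k) : bit x j = x ⟨j, h⟩ := dif_pos h

lemma bit_of_le (x : Fin k → Fin 2) {j : ℕ} (h : k ≤ j) : bit x j = 0 := dif_neg (by omega)

lemma bit_le_one (x : Fin k → Fin 2) (j : ℕ) : bit x j ≤ 1 := by
  by_cases h : j < k
  · rw [bit_of_lt x h]; omega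
  · rw [bit_of_le x (by omega)]; omega

def flipUpTo (p : Fin k) (x : Fin k → Fin 2) : Fin k → Fin 2 :=
  fun i => if i ≤ p then (x i).rev else x i

lemma bit_flipUpTo (p : Fin k) (x : Fin k → Fin 2) (j : ℕ) :
    bit (flipUpTo p x) j = if j ≤ p then 1 - bit x j else bit x j := by
  by_cases h : j < k
  · simp only [bit_of_lt _ h, flipUpTo, Fin.le_def]
    split_ifs <;> simp [Fin.val_rev]
  · rw [bit_of_le _ (by omega), bit_of_le _ (by omega), if_neg (by omega)]

def jumpSet (x : Fin k → Fin 2) : Finset (Fin k) :=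
  univ.filter fun j => bit x j ≠ bit x (j + 1)

lemma mem_jumpSet {x : Fin k → Fin 2} {j : Fin k} :
    j ∈ jumpSet x ↔ bit x j ≠ bit x (j + 1) := by
  simp [jumpSet]

lemma mem_jumpSet_flipUpTo {p j : Fin k} {x : Fin k → Fin 2} :
    j ∈ jumpSet (flipUpTo p x) ↔ (j ∈ jumpSet x ↔ j ≠ p) := by
  have := bit_le_one x j
  have := bit_le_one x (j + 1)
  simp only [mem_jumpSet, bit_flipUpTo, ne_eq, Fin.ext_iff]
  split_ifs <;> omega

lemma jumpSet_injective : Function.Injective (jumpSet (k := k)) := by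
  intro x y hxy
  have hbit : ∀ j ≤ k, bit x j = bit y j := by
    intro j hj
    induction hj using Nat.decreasingInduction with
    | self => rw [bit_of_le x le_rfl, bit_of_le y le_rfl]
    | of_succ j hj ih =>
      have hjump : (⟨j, hj⟩ : Fin k) ∈ jumpSet x ↔ ⟨j, hj⟩ ∈ jumpSet y := by rw [hxy]
      simp only [mem_jumpSet] at hjump
      have := bit_le_one x j
      have := bit_le_one y j
      have := bit_le_one y (j + 1)
      omega
  funext i
  have := hbit i i.is_lt.le
  rw [bit_of_lt x i.is_lt, bit_of_lt y i.is_lt] at this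
  exact Fin.ext this

lemma jumpSet_bijective : Function.Bijective (jumpSet (k := k)) :=
  (Fintype.bijective_iff_injective_and_card _).2 ⟨jumpSet_injective, by simp⟩

lemma eq_rev_of_ne {a b : Fin 2} (h : a ≠ b) : b = a.rev := by
  revert a b; decide

lemma eq_flipUpTo_of_adj {x y : Fin k → Fin 2} (h : (hierGraph (fun _ => 2) k).Adj x y) :
    ∃ p, y = flipUpTo p x := by
  obtain ⟨hne, hfirst | ⟨p, hprefix, hsuffix⟩ | ⟨m, -, -, hx, hy, hxy, -⟩⟩ := h
  · have hk : 0 < k := Nat.pos_of_ne_zero fun hk => by subst hk; exact hne (Subsingleton.elim _ _)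
    have h0 : x ⟨0, hk⟩ ≠ y ⟨0, hk⟩ := fun h0 => hne <| funext fun i => by
      rcases Nat.eq_zero_or_pos i with hi | hi
      · rwa [show i = ⟨0, hk⟩ from Fin.ext hi]
      · exact hfirst i hi
    refine ⟨⟨0, hk⟩, funext fun i => ?_⟩
    rcases Nat.eq_zero_or_pos i with hi | hi
    · obtain rfl : i = ⟨0, hk⟩ := Fin.ext hi
      simp [flipUpTo, eq_rev_of_ne h0]
    · simp [flipUpTo, Fin.le_def, hi.ne', hfirst i hi]
  · refine ⟨p, funext fun i => ?_⟩
    by_cases hip : i ≤ p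
    · have hxy : x i ≠ y i := by
        rcases hprefix with ⟨hx, hy⟩ | ⟨hy, hx⟩
        · exact fun e => hy i hip (e ▸ hx i hip)
        · exact fun e => hx i hip (e ▸ hy i hip)
      simp [flipUpTo, hip, eq_rev_of_ne hxy]
    · simp [flipUpTo, hip, hsuffix i (not_le.1 hip)]
  · exact absurd (Fin.ext (by omega)) hxy

lemma bit_eq_of_forall_le_of_mem_jumpSet {n : ℕ} {x : Fin k → Fin 2}
    (h : ∀ j ∈ jumpSet x, n ≤ j) {i : ℕ} (hi : i ≤ n) : bit x i = bit x n := by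
  induction n, hi using Nat.le_induction with
  | base => rfl
  | succ n hin ih =>
    refine (ih fun j hj => (h j hj).trans' n.le_succ).trans ?_
    by_cases hn : n < k
    · by_contra hjump
      have := h ⟨n, hn⟩ (mem_jumpSet.2 hjump)
      simp at this
    · rw [bit_of_le x (by omega), bit_of_le x (by omega)]

lemma flipUpTo_adj {p : Fin k} {x : Fin k → Fin 2} (h : ∀ j ∈ jumpSet x, p ≤ j) :
    (hierGraph (fun _ => 2) k).Adj x (flipUpTo p x) := by
  have hconst : ∀ i ≤ p, x i = x p := fun i hi => by
    have := bit_eq_of_forall_le_of_mem_jumpSet h hi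
    rw [bit_of_lt x i.is_lt, bit_of_lt x p.is_lt] at this
    exact Fin.ext this
  have hne : x ≠ flipUpTo p x := fun e => by
    have := congrFun e p
    simp only [flipUpTo, le_refl, if_true] at this
    revert this; generalize x p = a; revert a; decide
  have hflip : ∀ i ≤ p, (flipUpTo p x i).val = 1 - (x p).val := fun i hi => by
    simp [flipUpTo, hi, hconst i hi, Fin.val_rev]
  refine ⟨hne, Or.inr (Or.inl ⟨p, ?_, fun i hi => (if_neg (Fin.not_le.2 hi)).symm⟩)⟩
  by_cases h0 : (x p).val = 0
  · exact Or.inl ⟨fun i hi => by rw [hconst i hi, h0], fun i hi => by rw [hflip i hi]; omega⟩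
  · exact Or.inr ⟨fun i hi => by rw [hflip i hi]; omega,
      fun i hi => by rw [hconst i hi]; exact h0⟩

lemma card_jumpSet_le_of_adj {x y : Fin k → Fin 2} (h : (hierGraph (fun _ => 2) k).Adj x y) :
    #(jumpSet y) ≤ #(jumpSet x) + 1 := by
  obtain ⟨p, rfl⟩ := eq_flipUpTo_of_adj h
  calc #(jumpSet (flipUpTo p x)) ≤ #(insert p (jumpSet x)) := card_le_card fun j hj => by
        have := mem_jumpSet_flipUpTo.1 hj
        rw [mem_insert]
        tauto
    _ ≤ #(jumpSet x) + 1 := card_insert_le _ _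

lemma exists_adj_card_jumpSet_add_one {x : Fin k → Fin 2} (hx : (jumpSet x).Nonempty) :
    ∃ y, (hierGraph (fun _ => 2) k).Adj x y ∧ #(jumpSet y) + 1 = #(jumpSet x) := by
  set p := (jumpSet x).min' hx
  have hp : p ∈ jumpSet x := min'_mem _ hx
  refine ⟨flipUpTo p x, flipUpTo_adj fun j hj => min'_le _ j hj, ?_⟩
  have herase : jumpSet (flipUpTo p x) = (jumpSet x).erase p := by
    ext j
    rw [mem_jumpSet_flipUpTo, mem_erase]
    by_cases hj : j = p
    · simp [hj, hp]
    · simp [hj]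
  rw [herase, card_erase_add_one hp]

lemma card_jumpSet_eq_zero_iff {r : Fin k → Fin 2} (hr : ∀ i, (r i).val = 0)
    (x : Fin k → Fin 2) : #(jumpSet x) = 0 ↔ x = r := by
  have hbit : ∀ j, bit r j = 0 := fun j => by
    by_cases hj : j < k
    · rw [bit_of_lt r hj, hr]
    · exact bit_of_le r (by omega)
  have hjump : jumpSet r = ∅ := by
    ext j
    simp [mem_jumpSet, hbit]
  rw [card_eq_zero, ← hjump, jumpSet_injective.eq_iff]

lemma ncard_setOf_card_jumpSet_eq (i : ℕ) :
    {x : Fin k → Fin 2 | #(jumpSet x) = i}.ncard = k.choose i := by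
  have hpre : {x : Fin k → Fin 2 | #(jumpSet x) = i} =
      jumpSet ⁻¹' ↑(powersetCard i (univ : Finset (Fin k))) := by
    ext
    simp [mem_powersetCard]
  rw [hpre, Set.ncard_preimage_of_injective_subset_range jumpSet_injective
      (by simp [jumpSet_bijective.surjective.range_eq]),
    Set.ncard_coe_finset, card_powersetCard, card_univ, Fintype.card_fin]

end HierGraph

theorem stmt_15_general (k : ℕ) (r : ∀ i : Fin k, Fin 2) (hr : ∀ i, (r i).val = 0)
    (i : ℕ) :
    {x : ∀ j : Fin k, Fin 2 | (hierGraph (fun _ => 2) k).dist r x = i}.ncard =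
      Nat.choose k i := by
  have hdist : ∀ x, (hierGraph (fun _ => 2) k).dist r x = #(HierGraph.jumpSet x) :=
    (hierGraph (fun _ => 2) k).dist_eq_of_potential (fun x => #(HierGraph.jumpSet x))
      (HierGraph.card_jumpSet_eq_zero_iff hr) (fun _ _ => HierGraph.card_jumpSet_le_of_adj)
      (fun _ hx => HierGraph.exists_adj_card_jumpSet_add_one (card_ne_zero.1 hx))
  simp only [hdist]
  exact HierGraph.ncard_setOf_card_jumpSet_eq i

/-- In the binomial tree `H_{2,…,2}` (k copies of 2), the number of vertices at distance
exactly `i` from the root equals the binomial coefficient `C(k,i)`. -/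
theorem stmt_15 (k : ℕ) (hk : 1 ≤ k) (r : ∀ i : Fin k, Fin 2) (hr : ∀ i, (r i).val = 0)
    (i : ℕ) (hi : i ≤ k) :
    {x : ∀ j : Fin k, Fin 2 | (hierGraph (fun _ => 2) k).dist r x = i}.ncard =
      Nat.choose k i :=
  stmt_15_general k r hr i
end
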